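/- Let A ∈ ℝ^{n×n} and b ∈ ℝ^n with ρ(A) < 0. Then x = A* ⊗ b is the unique vector in ℝ^n satisfying x = (A ⊗ x) ⊕ b. -/

import Mathlib

open Finset

/-- Max-plus matrix-vector product: `(A ⊗ x)_i = max_j (a_{ij} + x_j)`. -/
noncomputable def mpMulVec {ι κ : Type*} [Fintype κ] (A : ι → κ → ℝ) (x : κ → ℝ) (i : ι) : ℝ :=
  ⨆ j, (A i j + x j)

/-- Max-plus matrix-matrix product: `(A ⊗ B)_{ik} = max_j (a_{ij} + b_{jk})`. -/
noncomputable def mpMul {ι κ τ : Type*} [Fintype κ] (A : ι → κ → ℝ) (B : κ → τ → ℝ)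
    (i : ι) (k : τ) : ℝ :=
  ⨆ j, (A i j + B j k)

/-- `mpPow1 A s` is the `(s+1)`-st max-plus power of `A`, i.e. `A^{⊗(s+1)}`. -/
noncomputable def mpPow1 {ι : Type*} [Fintype ι] (A : ι → ι → ℝ) : ℕ → ι → ι → ℝ
  | 0 => A
  | (k + 1) => mpMul A (mpPow1 A k)

/-- Weight of the walk `P 0 → P 1 → ⋯ → P len` in the complete weighted digraph `D(B)`. -/
noncomputable def walkWeight {ι : Type*} (B : ι → ι → ℝ) (len : ℕ) (P : Fin (len + 1) → ι) : ℝ :=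
  ∑ t : Fin len, B (P t.castSucc) (P t.succ)

/-- The maximum cycle mean `ρ(A)`: the maximum over all cycles (closed walks of length
`1 ≤ k ≤ n`) of the average weight of the cycle. -/
noncomputable def maxCycleMean {ι : Type*} [Fintype ι] (A : ι → ι → ℝ) : ℝ :=
  sSup { r | ∃ k, 1 ≤ k ∧ k ≤ Fintype.card ι ∧
    ∃ P : Fin (k + 1) → ι, P 0 = P (Fin.last k) ∧ r = walkWeight A k P / (k : ℝ) }

/-- Kleene star of `A` (meaningful when `ρ(A) ≤ 0`):
`A*_{ii} = max(0, max_{1 ≤ k ≤ n-1} (A^{⊗k})_{ii})` and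
`A*_{ij} = max_{1 ≤ k ≤ n-1} (A^{⊗k})_{ij}` for `i ≠ j`. -/
noncomputable def kleeneStar {ι : Type*} [Fintype ι] [DecidableEq ι] (A : ι → ι → ℝ)
    (i j : ι) : ℝ :=
  if i = j then max 0 (⨆ m : Fin (Fintype.card ι - 1), mpPow1 A (m : ℕ) i i)
  else ⨆ m : Fin (Fintype.card ι - 1), mpPow1 A (m : ℕ) i j

/-- Max-Łukasiewicz matrix-vector product: `(A ⊗_L x)_i = max_j max(0, a_{ij} + x_j - 1)`. -/
noncomputable def lukMulVec {ι κ : Type*} [Fintype κ] (A : ι → κ → ℝ) (x : κ → ℝ) (i : ι) : ℝ :=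
  ⨆ j, max 0 (A i j + x j - 1)

/-- Max-Łukasiewicz scalar action: `(λ ⊗_L x)_i = max(0, λ + x_i - 1)`. -/
noncomputable def lukSMul {ι : Type*} (lam : ℝ) (x : ι → ℝ) (i : ι) : ℝ :=
  max 0 (lam + x i - 1)

/-- Max-Łukasiewicz matrix-matrix product: `(A ⊗_L B)_{ik} = max_j max(0, a_{ij} + b_{jk} - 1)`. -/
noncomputable def lukMul {ι κ τ : Type*} [Fintype κ] (A : ι → κ → ℝ) (B : κ → τ → ℝ)
    (i : ι) (k : τ) : ℝ :=
  ⨆ j, max 0 (A i j + B j k - 1)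

/-- `lukPow1 A s` is the `(s+1)`-st Łukasiewicz power of `A`, i.e. `A^{⊗_L (s+1)}`. -/
noncomputable def lukPow1 {ι : Type*} [Fintype ι] (A : ι → ι → ℝ) : ℕ → ι → ι → ℝ
  | 0 => A
  | (t + 1) => lukMul A (lukPow1 A t)

/-- Max-plus matrix-vector product of a real matrix with a vector over `ℝ ∪ {-∞}` (`EReal`). -/
noncomputable def mpMulVecE {ι κ : Type*} [Fintype κ] (A : ι → κ → ℝ) (v : κ → EReal)
    (i : ι) : EReal :=
  ⨆ j, ((A i j : EReal) + v j)

/-- Node `i` of the weighted digraph `D(B)` is secure if every walk starting at `i` has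
nonpositive weight. -/
def SecureNode {ι : Type*} (B : ι → ι → ℝ) (i : ι) : Prop :=
  ∀ (len : ℕ) (P : Fin (len + 1) → ι), P 0 = i → walkWeight B len P ≤ 0

/-- The partition `(K, L)` of `{1,…,n}` is secure with respect to `D(B)` (with parameter `λ`):
if `L = ∅` this means `D(B)` is `λ`-secure (every walk has weight `≤ λ`); otherwise it means
that every walk starting in `L` whose all other nodes lie in `K` has nonpositive weight.
(If `L` is everything, the latter condition holds trivially, matching the convention.) -/
def SecurePartition {n : ℕ} (B : Fin n → Fin n → ℝ) (lam : ℝ) (K L : Finset (Fin n)) : Prop :=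
  if L = ∅ then
    ∀ (len : ℕ) (P : Fin (len + 1) → Fin n), walkWeight B len P ≤ lam
  else
    ∀ (len : ℕ) (P : Fin (len + 1) → Fin n),
      P 0 ∈ L → (∀ t : Fin (len + 1), t ≠ 0 → P t ∈ K) → walkWeight B len P ≤ 0


/-!
Read `x = (A ⊗ x) ⊕ b` as a Bellman equation on the complete digraph weighted by `A`: a walk from
`i` that stops at `l` earns its weight plus `b_l`. Cutting a cycle out of a walk changes its
weight by at most `ρ(A)` per removed edge, so when `ρ(A) ≤ 0` every walk weighs at most the
corresponding entry of `A*`. Hence `A* ⊗ b` is the least `z` with `A ⊗ z ≤ z` and `b ≤ z`, and it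
solves the equation. Conversely, unrolling the equation `k` times for a solution `x` either keeps
`x` below `A* ⊗ b` or bounds `x_i` by the weight of a walk of length `k` plus a constant; when
`ρ(A) < 0` that weight decreases like `k ρ(A)`, so the second alternative fails for large `k`.
-/

variable {ι κ : Type*}

section MaxPlus

variable [Fintype κ]

lemma le_mpMulVec (A : ι → κ → ℝ) (x : κ → ℝ) (i : ι) (j : κ) :
    A i j + x j ≤ mpMulVec A x i :=
  le_ciSup (f := fun j => A i j + x j) (Finite.bddAbove_range _) j

lemma mpMulVec_le [Nonempty κ] {A : ι → κ → ℝ} {x : κ → ℝ} {i : ι} {c : ℝ}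
    (h : ∀ j, A i j + x j ≤ c) : mpMulVec A x i ≤ c :=
  ciSup_le h

lemma exists_add_eq_mpMulVec [Nonempty κ] (A : ι → κ → ℝ) (x : κ → ℝ) (i : ι) :
    ∃ j, A i j + x j = mpMulVec A x i :=
  exists_eq_ciSup_of_finite

lemma mpMulVec_mono (A : ι → κ → ℝ) {x y : κ → ℝ} (h : ∀ j, x j ≤ y j) (i : ι) :
    mpMulVec A x i ≤ mpMulVec A y i :=
  ciSup_mono (Finite.bddAbove_range _) fun j => add_le_add le_rfl (h j)

end MaxPlus

/-- Walks are encoded as sequences `ℕ → ι`, of which only the first `k + 1` terms matter, so that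
cutting and splicing them needs no `Fin` casts. -/
def seqWeight (B : ι → ι → ℝ) (f : ℕ → ι) (k : ℕ) : ℝ :=
  ∑ u ∈ range k, B (f u) (f (u + 1))

section SeqWeight

variable (B : ι → ι → ℝ)

@[simp]
lemma seqWeight_zero (f : ℕ → ι) : seqWeight B f 0 = 0 := by
  simp [seqWeight]

lemma seqWeight_add (f : ℕ → ι) (a c : ℕ) :
    seqWeight B f (a + c) = seqWeight B f a + seqWeight B (fun u => f (a + u)) c := by
  simp only [seqWeight, sum_range_add, add_assoc]

lemma seqWeight_succ (f : ℕ → ι) (k : ℕ) :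
    seqWeight B f (k + 1) = B (f 0) (f 1) + seqWeight B (fun u => f (u + 1)) k := by
  simp [seqWeight, sum_range_succ', add_comm]

lemma seqWeight_cons (i : ι) (f : ℕ → ι) (k : ℕ) :
    seqWeight B (fun u => if u = 0 then i else f (u - 1)) (k + 1) =
      B i (f 0) + seqWeight B f k := by
  simp [seqWeight_succ]

lemma seqWeight_congr {f g : ℕ → ι} {k : ℕ} (h : ∀ u ≤ k, f u = g u) :
    seqWeight B f k = seqWeight B g k :=
  sum_congr rfl fun u hu => by
    have := mem_range.1 hu
    rw [h u (by omega), h (u + 1) (by omega)]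

lemma walkWeight_eq_seqWeight (f : ℕ → ι) (k : ℕ) :
    walkWeight B k (fun t => f t) = seqWeight B f k := by
  simp [walkWeight, seqWeight, Fin.sum_univ_eq_sum_range (fun u => B (f u) (f (u + 1)))]

end SeqWeight

section Walks

variable [Fintype ι] (A : ι → ι → ℝ)

lemma seqWeight_le_mpPow1 (m : ℕ) (f : ℕ → ι) :
    seqWeight A f (m + 1) ≤ mpPow1 A m (f 0) (f (m + 1)) := by
  induction m generalizing f with
  | zero => simp [seqWeight, mpPow1]
  | succ m ih =>
    rw [seqWeight_succ]
    exact (add_le_add le_rfl (ih _)).trans (le_mpMulVec A (fun l => mpPow1 A m l _) _ _)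

lemma exists_seqWeight_eq_mpPow1 (m : ℕ) (i j : ι) :
    ∃ f : ℕ → ι, f 0 = i ∧ f (m + 1) = j ∧ seqWeight A f (m + 1) = mpPow1 A m i j := by
  induction m generalizing i with
  | zero => exact ⟨fun u => if u = 0 then i else j, rfl, rfl, by simp [seqWeight, mpPow1]⟩
  | succ m ih =>
    have : Nonempty ι := ⟨i⟩
    obtain ⟨l, hl⟩ := exists_add_eq_mpMulVec A (fun l => mpPow1 A m l j) i
    obtain ⟨f, rfl, hfj, hf⟩ := ih l
    exact ⟨fun u => if u = 0 then i else f (u - 1), rfl, by simpa using hfj,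
      by rw [seqWeight_cons, hf, hl]; rfl⟩

lemma seqWeight_le_mul_maxCycleMean (f : ℕ → ι) {d : ℕ} (hd : 1 ≤ d)
    (hdι : d ≤ Fintype.card ι) (hf : f 0 = f d) : seqWeight A f d ≤ d * maxCycleMean A := by
  have hbdd : BddAbove {r | ∃ k, 1 ≤ k ∧ k ≤ Fintype.card ι ∧
      ∃ P : Fin (k + 1) → ι, P 0 = P (Fin.last k) ∧ r = walkWeight A k P / (k : ℝ)} := by
    refine (Set.Finite.subset (Set.finite_iUnion fun k : Fin (Fintype.card ι + 1) =>
      Set.finite_range fun P : Fin (k + 1) → ι => walkWeight A k P / k) ?_).bddAbove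
    rintro r ⟨k, -, hk, P, -, rfl⟩
    exact Set.mem_iUnion.2 ⟨⟨k, by omega⟩, P, rfl⟩
  rw [← div_le_iff₀' (by exact_mod_cast hd), ← walkWeight_eq_seqWeight]
  exact le_csSup hbdd ⟨d, hd, hdι, fun t => f t, by simpa using hf, rfl⟩

lemma exists_lt_le_card_eq (f : ℕ → ι) : ∃ s t, s < t ∧ t ≤ Fintype.card ι ∧ f s = f t := by
  obtain ⟨u, v, huv, he⟩ := Fintype.exists_ne_map_eq_of_card_lt
    (fun u : Fin (Fintype.card ι + 1) => f u) (by simp)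
  rcases lt_or_gt_of_ne (Fin.val_ne_of_ne huv) with h | h
  · exact ⟨u, v, h, by omega, he⟩
  · exact ⟨v, u, h, by omega, he.symm⟩

lemma exists_seqWeight_le_add_cycle (f : ℕ → ι) {k : ℕ} (hk : Fintype.card ι ≤ k) :
    ∃ d, 1 ≤ d ∧ d ≤ k ∧ ∃ g : ℕ → ι, g 0 = f 0 ∧ g (k - d) = f k ∧
      seqWeight A f k ≤ seqWeight A g (k - d) + d * maxCycleMean A := by
  obtain ⟨s, t, hst, ht, hfst⟩ := exists_lt_le_card_eq f
  let g : ℕ → ι := fun u => if u ≤ s then f u else f (u + (t - s))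
  have hg : ∀ u, g (s + u) = f (t + u) := by
    rintro (_ | u)
    · simp [g, hfst]
    · simp only [g, if_neg (by omega : ¬ s + (u + 1) ≤ s)]
      congr 1
      omega
  have hcycle := seqWeight_le_mul_maxCycleMean A (fun u => f (s + u)) (d := t - s) (by omega)
    (by omega) (by simp [hfst, show s + (t - s) = t by omega])
  refine ⟨t - s, by omega, by omega, g, by simp [g], ?_, ?_⟩
  · rw [show k - (t - s) = s + (k - t) by omega, hg]
    congr 1
    omega
  · have hgs : seqWeight A g s = seqWeight A f s := seqWeight_congr A fun u hu => by simp [g, hu]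
    rw [show k - (t - s) = s + (k - t) by omega, seqWeight_add, hgs,
      show (fun u => g (s + u)) = fun u => f (t + u) from funext hg]
    conv_lhs => rw [show k = s + (t - s) + (k - t) by omega, seqWeight_add, seqWeight_add,
      show s + (t - s) = t by omega]
    linarith

lemma exists_short_walk (f : ℕ → ι) (k : ℕ) :
    ∃ k' < Fintype.card ι, k' ≤ k ∧ ∃ g : ℕ → ι, g 0 = f 0 ∧ g k' = f k ∧
      seqWeight A f k ≤ seqWeight A g k' + maxCycleMean A * (k - k') := by
  induction k using Nat.strong_induction_on generalizing f with
  | _ k ih =>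
  by_cases hk : k < Fintype.card ι
  · exact ⟨k, hk, le_rfl, f, rfl, rfl, by simp⟩
  obtain ⟨d, hd, hdk, g, hg0, hgk, hfg⟩ := exists_seqWeight_le_add_cycle A f (not_lt.1 hk)
  obtain ⟨k', hk', hk'k, h, hh0, hhk, hgh⟩ := ih (k - d) (by omega) g
  refine ⟨k', hk', by omega, h, hh0.trans hg0, hhk.trans hgk, ?_⟩
  push_cast [hdk] at hgh
  linarith

end Walks

section KleeneStar

variable [Fintype ι] [DecidableEq ι] (A : ι → ι → ℝ)

lemma zero_le_kleeneStar_self (i : ι) : 0 ≤ kleeneStar A i i := by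
  simp [kleeneStar]

lemma mpPow1_le_kleeneStar_of_lt {m : ℕ} (hm : m < Fintype.card ι - 1) (i j : ι) :
    mpPow1 A m i j ≤ kleeneStar A i j := by
  have h : mpPow1 A m i j ≤ ⨆ m' : Fin (Fintype.card ι - 1), mpPow1 A m' i j :=
    le_ciSup (f := fun m' : Fin (Fintype.card ι - 1) => mpPow1 A m' i j)
      (Finite.bddAbove_range _) ⟨m, hm⟩
  unfold kleeneStar
  split_ifs with hij
  · subst hij
    exact h.trans (le_max_right _ _)
  · exact h

lemma kleeneStar_le {i j : ι} {c : ℝ} (h0 : i = j → 0 ≤ c)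
    (hpow : ∀ m < Fintype.card ι - 1, mpPow1 A m i j ≤ c) : kleeneStar A i j ≤ c := by
  unfold kleeneStar
  by_cases hij : i = j
  · subst hij
    rw [if_pos rfl]
    exact max_le (h0 rfl) (Real.iSup_le (fun m => hpow m m.2) (h0 rfl))
  · rw [if_neg hij]
    have : 1 < Fintype.card ι := Fintype.one_lt_card_iff.2 ⟨i, j, hij⟩
    have : Nonempty (Fin (Fintype.card ι - 1)) := ⟨⟨0, by omega⟩⟩
    exact ciSup_le fun m => hpow m m.2

lemma seqWeight_le_kleeneStar_of_lt (f : ℕ → ι) {k : ℕ} (hk : k < Fintype.card ι) :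
    seqWeight A f k ≤ kleeneStar A (f 0) (f k) := by
  rcases k with _ | m
  · simpa using zero_le_kleeneStar_self A (f 0)
  · exact (seqWeight_le_mpPow1 A m f).trans (mpPow1_le_kleeneStar_of_lt A (by omega) _ _)

variable {A}

lemma seqWeight_le_kleeneStar (hρ : maxCycleMean A ≤ 0) (f : ℕ → ι) (k : ℕ) :
    seqWeight A f k ≤ kleeneStar A (f 0) (f k) := by
  obtain ⟨k', hk', hk'k, g, hg0, hgk, hfg⟩ := exists_short_walk A f k
  have hg := seqWeight_le_kleeneStar_of_lt A g hk'
  rw [hg0, hgk] at hg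
  have : maxCycleMean A * (k - k') ≤ 0 :=
    mul_nonpos_of_nonpos_of_nonneg hρ (sub_nonneg.2 (by exact_mod_cast hk'k))
  linarith

lemma seqWeight_le_kleeneStar_add (hρ : maxCycleMean A ≤ 0) (f : ℕ → ι) (k : ℕ) :
    seqWeight A f k ≤ kleeneStar A (f 0) (f k) + maxCycleMean A * (k + 1 - Fintype.card ι) := by
  obtain ⟨k', hk', -, g, hg0, hgk, hfg⟩ := exists_short_walk A f k
  have hg := seqWeight_le_kleeneStar_of_lt A g hk'
  rw [hg0, hgk] at hg
  have hk'' : (k' : ℝ) + 1 ≤ Fintype.card ι := by exact_mod_cast hk'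
  have : maxCycleMean A * (k - k') ≤ maxCycleMean A * (k + 1 - Fintype.card ι) :=
    mul_le_mul_of_nonpos_left (by linarith) hρ
  linarith

lemma mpPow1_le_kleeneStar (hρ : maxCycleMean A ≤ 0) (m : ℕ) (i j : ι) :
    mpPow1 A m i j ≤ kleeneStar A i j := by
  obtain ⟨f, rfl, rfl, hf⟩ := exists_seqWeight_eq_mpPow1 A m i j
  exact hf ▸ seqWeight_le_kleeneStar hρ f (m + 1)

lemma add_kleeneStar_le (hρ : maxCycleMean A ≤ 0) (i j l : ι) :
    A i j + kleeneStar A j l ≤ kleeneStar A i l := by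
  suffices kleeneStar A j l ≤ kleeneStar A i l - A i j by linarith
  refine kleeneStar_le A (fun hjl => ?_) fun m _ => ?_
  · have : A i j ≤ kleeneStar A i j := mpPow1_le_kleeneStar hρ 0 i j
    subst hjl
    linarith
  · have : A i j + mpPow1 A m j l ≤ mpPow1 A (m + 1) i l :=
      le_mpMulVec A (fun l' => mpPow1 A m l' l) i j
    linarith [mpPow1_le_kleeneStar hρ (m + 1) i l]

end KleeneStar

section FixedPoint

variable [Fintype ι] {A : ι → ι → ℝ} {b x : ι → ℝ}

lemma mpPow1_add_le (hx : ∀ i, mpMulVec A x i ≤ x i) (m : ℕ) (i l : ι) :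
    mpPow1 A m i l + x l ≤ x i := by
  induction m generalizing i with
  | zero => exact (le_mpMulVec A x i l).trans (hx i)
  | succ m ih =>
    have : Nonempty ι := ⟨i⟩
    have : mpPow1 A (m + 1) i l ≤ x i - x l :=
      mpMulVec_le fun j => by linarith [ih j, le_mpMulVec A x i j, hx i]
    linarith

lemma le_or_exists_seqWeight {z : ι → ℝ} (hx : ∀ i, x i = max (mpMulVec A x i) (b i))
    (hz : ∀ i, mpMulVec A z i ≤ z i) (hbz : ∀ i, b i ≤ z i) (k : ℕ) (i : ι) :
    x i ≤ z i ∨ ∃ f : ℕ → ι, f 0 = i ∧ x i ≤ seqWeight A f k + x (f k) := by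
  induction k generalizing i with
  | zero => exact .inr ⟨fun _ => i, rfl, by simp⟩
  | succ k ih =>
    have : Nonempty ι := ⟨i⟩
    rcases le_total (mpMulVec A x i) (b i) with hb | hA
    · exact .inl (by rw [hx i, max_eq_right hb]; exact hbz i)
    obtain ⟨j, hj⟩ := exists_add_eq_mpMulVec A x i
    have hxi : x i = A i j + x j := by rw [hx i, max_eq_left hA, hj]
    rcases ih j with hzj | ⟨f, hf0, hf⟩
    · exact .inl (by linarith [le_mpMulVec A z i j, hz i])
    · refine .inr ⟨fun u => if u = 0 then i else f (u - 1), rfl, ?_⟩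
      rw [seqWeight_cons, hf0, hxi]
      simp only [Nat.add_one_ne_zero, if_false, add_tsub_cancel_right]
      linarith

variable [DecidableEq ι]

lemma mpMulVec_kleeneStar_le (hx : ∀ i, mpMulVec A x i ≤ x i) (hb : ∀ i, b i ≤ x i) (i : ι) :
    mpMulVec (kleeneStar A) b i ≤ x i := by
  have : Nonempty ι := ⟨i⟩
  refine mpMulVec_le fun l => ?_
  suffices kleeneStar A i l ≤ x i - b l by linarith
  refine kleeneStar_le A (fun hil => ?_) fun m _ => ?_
  · subst hil
    linarith [hb i]
  · linarith [mpPow1_add_le hx m i l, hb l]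

lemma le_mpMulVec_kleeneStar (i : ι) : b i ≤ mpMulVec (kleeneStar A) b i := by
  linarith [le_mpMulVec (kleeneStar A) b i i, zero_le_kleeneStar_self A i]

lemma mpMulVec_mpMulVec_kleeneStar_le (hρ : maxCycleMean A ≤ 0) (i : ι) :
    mpMulVec A (mpMulVec (kleeneStar A) b) i ≤ mpMulVec (kleeneStar A) b i := by
  have : Nonempty ι := ⟨i⟩
  refine mpMulVec_le fun j => ?_
  suffices mpMulVec (kleeneStar A) b j ≤ mpMulVec (kleeneStar A) b i - A i j by linarith
  exact mpMulVec_le fun l => by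
    linarith [add_kleeneStar_le hρ i j l, le_mpMulVec (kleeneStar A) b i l]

theorem mpMulVec_kleeneStar_eq_max (hρ : maxCycleMean A ≤ 0) (i : ι) :
    mpMulVec (kleeneStar A) b i = max (mpMulVec A (mpMulVec (kleeneStar A) b) i) (b i) := by
  set z := mpMulVec (kleeneStar A) b
  have hyz : ∀ i, max (mpMulVec A z i) (b i) ≤ z i := fun i =>
    max_le (mpMulVec_mpMulVec_kleeneStar_le hρ i) (le_mpMulVec_kleeneStar i)
  refine le_antisymm (mpMulVec_kleeneStar_le (fun i => ?_) (fun i => le_max_right _ _) i) (hyz i)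
  exact (mpMulVec_mono A hyz i).trans (le_max_left _ _)

lemma le_mpMulVec_kleeneStar_of_eq (hρ : maxCycleMean A < 0)
    (hx : ∀ i, x i = max (mpMulVec A x i) (b i)) (i : ι) : x i ≤ mpMulVec (kleeneStar A) b i := by
  set M := mpMulVec (kleeneStar A) x i
  obtain ⟨k, hk⟩ := exists_nat_gt ((M - x i) / -maxCycleMean A + Fintype.card ι)
  have hdecay : M + maxCycleMean A * (k + 1 - Fintype.card ι) < x i := by
    have := (div_lt_iff₀ (neg_pos.2 hρ)).1
      (by linarith : (M - x i) / -maxCycleMean A < k - Fintype.card ι)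
    linarith
  rcases le_or_exists_seqWeight hx (mpMulVec_mpMulVec_kleeneStar_le hρ.le)
    le_mpMulVec_kleeneStar k i with h | ⟨f, hf0, hf⟩
  · exact h
  · have hwalk := seqWeight_le_kleeneStar_add hρ.le f k
    have hM := le_mpMulVec (kleeneStar A) x (f 0) (f k)
    rw [hf0] at hwalk hM
    linarith

end FixedPoint

theorem stmt3_general {n : ℕ} (A : Fin n → Fin n → ℝ) (b : Fin n → ℝ)
    (hrho : maxCycleMean A < 0) (x : Fin n → ℝ) :
    (∀ i, x i = max (mpMulVec A x i) (b i)) ↔ x = mpMulVec (kleeneStar A) b := by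
  constructor
  · intro hx
    funext i
    exact le_antisymm (le_mpMulVec_kleeneStar_of_eq hrho hx i) <|
      mpMulVec_kleeneStar_le (fun j => (le_max_left _ _).trans_eq (hx j).symm)
        (fun j => (le_max_right _ _).trans_eq (hx j).symm) i
  · rintro rfl
    exact mpMulVec_kleeneStar_eq_max hrho.le

/-- when `ρ(A) < 0`, `x = A* ⊗ b` is the unique solution of `x = (A ⊗ x) ⊕ b`. -/
theorem stmt3 {n : ℕ} (hn : 0 < n) (A : Fin n → Fin n → ℝ) (b : Fin n → ℝ)
    (hrho : maxCycleMean A < 0) (x : Fin n → ℝ) :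
    (∀ i, x i = max (mpMulVec A x i) (b i)) ↔ x = mpMulVec (kleeneStar A) b :=
  stmt3_general A b hrho x
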